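/- Let 0 < α ≤ 1, let λ ∈ ℂ with λ ≠ 0, and let c ∈ ℂ. If E_α(λ x^α) = e^{c x} for all real x ≥ 0, then α = 1 and λ = c. -/

import Mathlib

/-!
`E_α(z) = ∑ z^k / Γ(1 + kα)` is a power series with bounded coefficients, so it is
differentiable at `0` with `E_α(0) = 1` and `E_α'(0) = 1 / Γ(1 + α)`. Hence, as `x → 0⁺`,
`(E_α(λ x^α) - 1) / x^α → λ / Γ(1 + α)`, while `(e^{cx} - 1) / x^α = (e^{cx} - 1) / x · x^{1-α}`
tends to `c · 0^{1-α}`. For `α < 1` this limit is `0`, contradicting `λ ≠ 0`; for `α = 1` it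
reads `λ = c`.
-/

open Filter Topology FormalMultilinearSeries

noncomputable def mittagLeffler (α : ℝ) (z : ℂ) : ℂ :=
  ∑' k : ℕ, z ^ k / Complex.Gamma ((1 + k * α : ℝ) : ℂ)

noncomputable def mittagLefflerSeries (α : ℝ) : FormalMultilinearSeries ℂ ℂ ℂ :=
  ofScalars ℂ fun k : ℕ => (Complex.Gamma ((1 + k * α : ℝ) : ℂ))⁻¹

lemma mittagLefflerSeries_sum (α : ℝ) : (mittagLefflerSeries α).sum = mittagLeffler α := by
  funext z
  refine (ofScalars_sum_eq _ z).trans (tsum_congr fun k => ?_)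
  rw [smul_eq_mul, inv_mul_eq_div]

lemma mittagLeffler_zero (α : ℝ) : mittagLeffler α 0 = 1 := by
  rw [← mittagLefflerSeries_sum]
  simp [mittagLefflerSeries, ← ofScalarsSum.eq_def]

lemma Real.exists_pos_le_Gamma : ∃ m > 0, ∀ s : ℝ, 0 < s → m ≤ Real.Gamma s := by
  obtain ⟨x₀, hx₀, hmin⟩ := Real.exists_isMinOn_Gamma_Ioi
  exact ⟨_, Real.Gamma_pos_of_pos (by linarith [hx₀.1]), fun s hs => hmin hs⟩

lemma one_le_radius_mittagLefflerSeries {α : ℝ} (hα : 0 ≤ α) :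
    1 ≤ (mittagLefflerSeries α).radius := by
  obtain ⟨m, hm, hΓ⟩ := Real.exists_pos_le_Gamma
  have := (mittagLefflerSeries α).le_radius_of_bound m⁻¹ (r := 1) fun k => by
    have hk : 0 < 1 + k * α := by positivity
    simp only [mittagLefflerSeries, ofScalars_norm, norm_inv, Complex.Gamma_ofReal,
      Complex.norm_real, Real.norm_of_nonneg (Real.Gamma_pos_of_pos hk).le, NNReal.coe_one,
      one_pow, mul_one]
    exact inv_anti₀ hm (hΓ _ hk)
  simpa using this

lemma hasDerivAt_mittagLeffler_zero {α : ℝ} (hα : 0 ≤ α) :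
    HasDerivAt (mittagLeffler α) (Complex.Gamma (1 + α))⁻¹ 0 := by
  have hp := (mittagLefflerSeries α).hasFPowerSeriesOnBall
    (zero_lt_one.trans_le (one_le_radius_mittagLefflerSeries hα))
  rw [mittagLefflerSeries_sum] at hp
  refine hp.hasFPowerSeriesAt.hasDerivAt.congr_deriv ?_
  simp [mittagLefflerSeries]

lemma tendsto_const_mul_ofReal_rpow_nhdsNE_zero {α : ℝ} (hα : 0 < α) {lam : ℂ} (hlam : lam ≠ 0) :
    Tendsto (fun x : ℝ => lam * ((x ^ α : ℝ) : ℂ)) (𝓝[>] 0) (𝓝[≠] 0) := by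
  refine tendsto_nhdsWithin_of_tendsto_nhds_of_eventually_within _ ?_ ?_
  · have := ((Real.continuousAt_rpow_const 0 α (Or.inr hα.le)).tendsto.mono_left
      (nhdsWithin_le_nhds (s := Set.Ioi 0)))
    rw [Real.zero_rpow hα.ne'] at this
    simpa using (Complex.continuous_ofReal.tendsto 0).comp this |>.const_mul lam
  · filter_upwards [self_mem_nhdsWithin] with x hx
    exact mul_ne_zero hlam (Complex.ofReal_ne_zero.2 (Real.rpow_pos_of_pos hx α).ne')

lemma tendsto_mittagLeffler_sub_one_div_rpow {α : ℝ} (hα : 0 < α) {lam : ℂ} (hlam : lam ≠ 0) :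
    Tendsto (fun x : ℝ => (mittagLeffler α (lam * ((x ^ α : ℝ) : ℂ)) - 1) / ((x ^ α : ℝ) : ℂ))
      (𝓝[>] 0) (𝓝 (lam * (Complex.Gamma (1 + α))⁻¹)) := by
  have hslope := (hasDerivAt_iff_tendsto_slope_zero.1 (hasDerivAt_mittagLeffler_zero hα.le)).comp
    (tendsto_const_mul_ofReal_rpow_nhdsNE_zero hα hlam)
  refine (hslope.const_mul lam).congr' ?_
  filter_upwards [self_mem_nhdsWithin] with x hx
  have hxα : ((x ^ α : ℝ) : ℂ) ≠ 0 := Complex.ofReal_ne_zero.2 (Real.rpow_pos_of_pos hx α).ne'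
  simp only [Function.comp_apply, zero_add, mittagLeffler_zero, smul_eq_mul]
  field_simp

lemma tendsto_exp_sub_one_div_rpow {α : ℝ} (hα : α ≤ 1) (c : ℂ) :
    Tendsto (fun x : ℝ => (Complex.exp (c * x) - 1) / ((x ^ α : ℝ) : ℂ))
      (𝓝[>] 0) (𝓝 (c * ((0 : ℝ) ^ (1 - α) : ℝ))) := by
  have hderiv : HasDerivAt (fun x : ℝ => Complex.exp (c * x)) c 0 := by
    simpa using
      ((Complex.hasDerivAt_exp (c * 0)).comp 0 ((hasDerivAt_id (0 : ℂ)).const_mul c)).comp_ofReal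
  have hslope := (hasDerivAt_iff_tendsto_slope_zero.1 hderiv).mono_left
    (nhdsWithin_mono 0 fun x (hx : x ∈ Set.Ioi 0) => ne_of_gt hx)
  have hpow := (Complex.continuous_ofReal.tendsto _).comp
    ((Real.continuousAt_rpow_const 0 (1 - α) (Or.inr (by linarith))).tendsto.mono_left
      (nhdsWithin_le_nhds (s := Set.Ioi 0)))
  refine (hslope.mul hpow).congr' ?_
  filter_upwards [self_mem_nhdsWithin] with x (hx : 0 < x)
  have hsplit : x = x ^ α * x ^ (1 - α) := by
    rw [← Real.rpow_add hx, add_sub_cancel, Real.rpow_one]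
  have hxα : ((x ^ α : ℝ) : ℂ) ≠ 0 := Complex.ofReal_ne_zero.2 (Real.rpow_pos_of_pos hx α).ne'
  have hx1α : ((x ^ (1 - α) : ℝ) : ℂ) ≠ 0 :=
    Complex.ofReal_ne_zero.2 (Real.rpow_pos_of_pos hx _).ne'
  simp only [Function.comp_apply, zero_add, Complex.ofReal_zero, mul_zero, Complex.exp_zero,
    Complex.real_smul]
  nth_rw 1 [hsplit]
  push_cast
  field_simp

/-- If `0 < α ≤ 1`, `λ ≠ 0`, and `E_α(λ x^α) = e^{c x}` for all `x ≥ 0`, then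
`α = 1` and `λ = c`. -/
theorem mittagLeffler_eq_exp_forces (α : ℝ) (hα0 : 0 < α) (hα1 : α ≤ 1)
    (lam c : ℂ) (hlam : lam ≠ 0)
    (h : ∀ x : ℝ, 0 ≤ x →
      (∑' k : ℕ, (lam * ((x ^ α : ℝ) : ℂ)) ^ k /
        Complex.Gamma ((1 + k * α : ℝ) : ℂ)) = Complex.exp (c * x)) :
    α = 1 ∧ lam = c := by
  have hlim : lam * (Complex.Gamma (1 + α))⁻¹ = c * ((0 : ℝ) ^ (1 - α) : ℝ) := by
    refine tendsto_nhds_unique ?_ (tendsto_exp_sub_one_div_rpow hα1 c)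
    refine (tendsto_mittagLeffler_sub_one_div_rpow hα0 hlam).congr' ?_
    filter_upwards [self_mem_nhdsWithin] with x (hx : 0 < x)
    rw [mittagLeffler, h x hx.le]
  have hΓ : Complex.Gamma (1 + α) ≠ 0 := by
    rw [← Complex.ofReal_one, ← Complex.ofReal_add, Complex.Gamma_ofReal]
    exact_mod_cast (Real.Gamma_pos_of_pos (by linarith : 0 < 1 + α)).ne'
  rcases hα1.lt_or_eq with hlt | rfl
  · rw [Real.zero_rpow (by linarith), Complex.ofReal_zero, mul_zero] at hlim
    exact absurd hlim (mul_ne_zero hlam (inv_ne_zero hΓ))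
  · refine ⟨rfl, ?_⟩
    simpa [one_add_one_eq_two] using hlim
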